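/- Let G be a strongly topological gyrogroup with symmetric base μ at 0, U ∈ μ, and H a compact subset of G. Then there exists V ∈ μ such that h ⊕ (V ⊞ (⊖h)) ⊆ U for every h ∈ H, where ⊞ is the gyrogroup cooperation x ⊞ y = x ⊕ gyr[x, ⊖y](y). -/
import Mathlib


universe u v

class Gyrogroup (G : Type u) where
  add : G → G → G
  zero : G
  neg : G → G
  gyr : G → G → Equiv.Perm G
  zero_add : ∀ a : G, add zero a = a
  add_zero : ∀ a : G, add a zero = a
  neg_add : ∀ a : G, add (neg a) a = zero
  add_neg : ∀ a : G, add a (neg a) = zero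
  gyr_hom : ∀ x y a b : G, gyr x y (add a b) = add (gyr x y a) (gyr x y b)
  gyrassoc : ∀ x y z : G, add x (add y z) = add (add x y) (gyr x y z)
  loop : ∀ x y : G, gyr (add x y) y = gyr x y

open Gyrogroup

/-- The gyrogroup cooperation x ⊞ y = x ⊕ gyr[x, ⊖y](y). -/
def coadd {G : Type u} [Gyrogroup G] (x y : G) : G :=
  add x (gyr x (neg y) y)

section lemmas

variable {G : Type u} [Gyrogroup G]

lemma gyro_left_cancel' (a b : G) : add (neg a) (add a b) = gyr (neg a) a b := by
  rw [gyrassoc, Gyrogroup.neg_add, Gyrogroup.zero_add]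

lemma gyro_gyr_zero (y z : G) : gyr (zero : G) y z = z := by
  have h : add y z = add y (gyr (zero : G) y z) := by
    have := gyrassoc (zero : G) y z
    rwa [Gyrogroup.zero_add, Gyrogroup.zero_add] at this
  have h2 : gyr (neg y) y z = gyr (neg y) y (gyr (zero : G) y z) := by
    rw [← gyro_left_cancel', ← gyro_left_cancel', ← h]
  exact ((gyr (neg y) y).injective h2).symm

lemma gyro_gyr_neg_self (y z : G) : gyr (neg y) y z = z := by
  have := loop (neg y) y
  rw [Gyrogroup.neg_add] at this
  rw [← this, gyro_gyr_zero]

lemma gyro_left_cancel (a b : G) : add (neg a) (add a b) = b := by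
  rw [gyro_left_cancel', gyro_gyr_neg_self]

lemma gyro_gyr_eq (x y z : G) :
    gyr x y z = add (neg (add x y)) (add x (add y z)) := by
  rw [gyrassoc x y z, gyro_left_cancel]

end lemmas

/-- In a strongly topological gyrogroup, for U ∈ μ and compact H there is V ∈ μ with
h ⊕ (V ⊞ (⊖h)) ⊆ U for all h ∈ H. -/
theorem compact_coadd_subordination {G : Type u} [Gyrogroup G] [TopologicalSpace G] [T2Space G]
    (hcadd : Continuous fun p : G × G => add p.1 p.2)
    (hcneg : Continuous (neg : G → G))
    (μ : Set (Set G))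
    (hopen : ∀ U ∈ μ, IsOpen U ∧ (zero : G) ∈ U)
    (hbase : ∀ V : Set G, IsOpen V → (zero : G) ∈ V → ∃ U ∈ μ, U ⊆ V)
    (hsym : ∀ U ∈ μ, ∀ x ∈ U, neg x ∈ U)
    (hgyrμ : ∀ U ∈ μ, ∀ x y : G, (gyr x y) '' U = U)
    (U : Set G) (hU : U ∈ μ) (K : Set G) (hK : IsCompact K) :
    ∃ V ∈ μ, ∀ h ∈ K, ∀ v ∈ V, add h (coadd v (neg h)) ∈ U := by
  classical
  -- the key map, expressed without gyr so that it is continuous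
  set F : G × G → G := fun p => add p.1 (coadd p.2 (neg p.1)) with hF
  have hFeq : F = fun p : G × G =>
      add p.1 (add p.2 (add (neg (add p.2 (neg (neg p.1))))
        (add p.2 (add (neg (neg p.1)) (neg p.1))))) := by
    funext p
    simp only [hF, coadd, gyro_gyr_eq]
  have hcont : Continuous F := by
    rw [hFeq]
    fun_prop
  have hF0 : ∀ h : G, F (h, zero) = zero := by
    intro h
    simp only [hF, coadd, gyro_gyr_zero, Gyrogroup.zero_add]
    exact Gyrogroup.add_neg h
  obtain ⟨hUopen, hU0⟩ := hopen U hU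
  -- for each h, get open nbhds
  have key : ∀ h : G, ∃ W : Set G, IsOpen W ∧ h ∈ W ∧ ∃ V ∈ μ,
      ∀ x ∈ W, ∀ v ∈ V, F (x, v) ∈ U := by
    intro h
    have hmem : F (h, zero) ∈ U := by rw [hF0]; exact hU0
    have hc : ContinuousAt F (h, zero) := hcont.continuousAt
    have hnb : F ⁻¹' U ∈ nhds (h, zero) := hc.preimage_mem_nhds (hUopen.mem_nhds hmem)
    rw [nhds_prod_eq, Filter.mem_prod_iff] at hnb
    obtain ⟨W, hW, V, hV, hWV⟩ := hnb
    obtain ⟨W', hW'sub, hW'open, hW'mem⟩ := mem_nhds_iff.mp hW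
    obtain ⟨V', hV'sub, hV'open, hV'mem⟩ := mem_nhds_iff.mp hV
    obtain ⟨V'', hV''μ, hV''sub⟩ := hbase V' hV'open hV'mem
    refine ⟨W', hW'open, hW'mem, V'', hV''μ, ?_⟩
    intro x hx v hv
    exact hWV (Set.mk_mem_prod (hW'sub hx) (hV'sub (hV''sub hv)))
  choose W hWopen hWmem V hVμ hprop using key
  obtain ⟨t, ht⟩ := hK.elim_finite_subcover W hWopen (fun x hx => Set.mem_iUnion.mpr ⟨x, hWmem x⟩)
  -- intersect the finitely many V's
  have hIopen : IsOpen (⋂ h ∈ t, V h) := isOpen_biInter_finset (fun h _ => (hopen _ (hVμ h)).1)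
  have hI0 : (zero : G) ∈ ⋂ h ∈ t, V h :=
    Set.mem_biInter (fun h _ => (hopen _ (hVμ h)).2)
  obtain ⟨V₀, hV₀μ, hV₀sub⟩ := hbase _ hIopen hI0
  refine ⟨V₀, hV₀μ, ?_⟩
  intro h hh v hv
  obtain ⟨i, hi, hhi⟩ := Set.mem_iUnion₂.mp (ht hh)
  exact hprop i h hhi v (Set.mem_iInter₂.mp (hV₀sub hv) i hi)
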